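/- Let ⟨x,y⟩₁ = −x₀y₀ + x₁y₁ + x₂y₂ + x₃y₃ + x₄y₄ denote the Lorentzian bilinear form on ℝ⁵, let a be a nonzero real number and b a real number with b/a − 1/(4a²) − 1 ≥ 0, and let Θ(t,u) = (a(t²+u²) + b, t, u, √(b/a − 1/(4a²) − 1), a(t²+u²) − 1/(2a) + b). Define ξ₁(t,u) = (0, 0, 0, 1, 0), ξ₂(t,u) = ((4a²(t²+u²) + 3)/(2√2), √2·a t, √2·a u, 0, (4a²(t²+u²) + 1)/(2√2)), and ξ₃(t,u) = ((1 − 4a²(t²+u²))/(2√2), −√2·a t, −√2·a u, 0, (3 − 4a²(t²+u²))/(2√2)). Then for all (t,u): ⟨ξ₁,ξ₁⟩₁ = 1, ⟨ξ₂,ξ₂⟩₁ = −1, ⟨ξ₃,ξ₃⟩₁ = 1; ⟨ξᵢ,ξⱼ⟩₁ = 0 for i ≠ j; ⟨ξᵢ, ∂ₜΘ⟩₁ = ⟨ξᵢ, ∂ᵤΘ⟩₁ = 0 for each i; and each partial derivative of each ξᵢ lies in the span of {∂ₜΘ, ∂ᵤΘ} (explicitly ∂ₜξ₁ = ∂ᵤξ₁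 = 0, ∂ₜξ₂ = √2·a·∂ₜΘ, ∂ᵤξ₂ = √2·a·∂ᵤΘ, ∂ₜξ₃ = −√2·a·∂ₜΘ, ∂ᵤξ₃ = −√2·a·∂ᵤΘ). -/

import Mathlib

/-- The Lorentzian bilinear form on `ℝ⁵` with timelike coordinate `x₀`. -/
def lor5 (x y : Fin 5 → ℝ) : ℝ :=
  -(x 0 * y 0) + x 1 * y 1 + x 2 * y 2 + x 3 * y 3 + x 4 * y 4

/-!
`Θ`, `ξ₂` and `ξ₃` are all of the form `(t² + u²) • A + t • B + u • C + D`, and the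
coefficients `A, B, C` of `ξ₂` (resp. `ξ₃`) are `√2 a` (resp. `-√2 a`) times those of `Θ`.
Hence `∂ξ₂ = √2 a ∂Θ` and `∂ξ₃ = -√2 a ∂Θ` whatever the constant terms are; the remaining
relations are polynomial identities in `t, u, a` and `√2` modulo `√2 ^ 2 = 2`.
-/

open Real Submodule

section ParaboloidMap

variable {E : Type*} [NormedAddCommGroup E] [NormedSpace ℝ E]

def paraboloidMap (A B C D : E) (t u : ℝ) : E :=
  (t ^ 2 + u ^ 2) • A + t • B + u • C + D

theorem paraboloidMap_swap (A B C D : E) (t u : ℝ) :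
    paraboloidMap A B C D t u = paraboloidMap A C B D u t := by
  simp only [paraboloidMap, add_comm (t ^ 2), add_right_comm _ (t • B)]

theorem hasDerivAt_paraboloidMap_fst (A B C D : E) (t u : ℝ) :
    HasDerivAt (paraboloidMap A B C D · u) ((2 * t) • A + B) t := by
  have := ((((hasDerivAt_pow 2 t).add_const (u ^ 2)).smul_const A).add
    ((hasDerivAt_id t).smul_const B)).add_const (u • C + D)
  convert this using 1
  · ext t'
    simp [paraboloidMap, add_assoc]
  · simp

theorem hasDerivAt_paraboloidMap_snd (A B C D : E) (t u : ℝ) :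
    HasDerivAt (paraboloidMap A B C D t ·) ((2 * u) • A + C) u := by
  simpa only [paraboloidMap_swap A B C D t] using hasDerivAt_paraboloidMap_fst A C B D u t

theorem deriv_paraboloidMap_smul_fst (k : ℝ) (A B C D D' : E) (t u : ℝ) :
    deriv (paraboloidMap (k • A) (k • B) (k • C) D' · u) t =
      k • deriv (paraboloidMap A B C D · u) t := by
  rw [(hasDerivAt_paraboloidMap_fst _ _ _ _ t u).deriv,
    (hasDerivAt_paraboloidMap_fst _ _ _ _ t u).deriv]
  module

theorem deriv_paraboloidMap_smul_snd (k : ℝ) (A B C D D' : E) (t u : ℝ) :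
    deriv (paraboloidMap (k • A) (k • B) (k • C) D' t ·) u =
      k • deriv (paraboloidMap A B C D t ·) u := by
  rw [(hasDerivAt_paraboloidMap_snd _ _ _ _ t u).deriv,
    (hasDerivAt_paraboloidMap_snd _ _ _ _ t u).deriv]
  module

end ParaboloidMap

section NormalFrame

variable (a t u : ℝ)

theorem surface_eq_paraboloidMap (b c : ℝ) :
    ![a * (t ^ 2 + u ^ 2) + b, t, u, c, a * (t ^ 2 + u ^ 2) - 1 / (2 * a) + b] =
      paraboloidMap ![a, 0, 0, 0, a] ![0, 1, 0, 0, 0] ![0, 0, 1, 0, 0]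
        ![b, 0, 0, c, b - 1 / (2 * a)] t u := by
  ext i
  fin_cases i <;> simp [paraboloidMap] <;> ring

theorem timelikeNormal_eq_paraboloidMap :
    ![(4 * a ^ 2 * (t ^ 2 + u ^ 2) + 3) / (2 * √2), √2 * a * t, √2 * a * u, 0,
        (4 * a ^ 2 * (t ^ 2 + u ^ 2) + 1) / (2 * √2)] =
      paraboloidMap ((√2 * a) • ![a, 0, 0, 0, a]) ((√2 * a) • ![0, 1, 0, 0, 0])
        ((√2 * a) • ![0, 0, 1, 0, 0]) ![3 / (2 * √2), 0, 0, 0, 1 / (2 * √2)] t u := by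
  have hs : √2 ^ 2 = 2 := sq_sqrt zero_le_two
  ext i
  fin_cases i <;> simp [paraboloidMap] <;> field_simp <;> grind

theorem spacelikeNormal_eq_paraboloidMap :
    ![(1 - 4 * a ^ 2 * (t ^ 2 + u ^ 2)) / (2 * √2), -(√2 * a * t), -(√2 * a * u), 0,
        (3 - 4 * a ^ 2 * (t ^ 2 + u ^ 2)) / (2 * √2)] =
      paraboloidMap ((-(√2 * a)) • ![a, 0, 0, 0, a]) ((-(√2 * a)) • ![0, 1, 0, 0, 0])
        ((-(√2 * a)) • ![0, 0, 1, 0, 0]) ![1 / (2 * √2), 0, 0, 0, 3 / (2 * √2)] t u := by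
  have hs : √2 ^ 2 = 2 := sq_sqrt zero_le_two
  ext i
  fin_cases i <;> simp [paraboloidMap] <;> field_simp <;> grind

end NormalFrame

theorem stmt_12_general (a b : ℝ)
    (Θ ξ₁ ξ₂ ξ₃ : ℝ → ℝ → Fin 5 → ℝ)
    (hΘ : ∀ t u : ℝ, Θ t u =
      ![a * (t ^ 2 + u ^ 2) + b, t, u,
        Real.sqrt (b / a - 1 / (4 * a ^ 2) - 1),
        a * (t ^ 2 + u ^ 2) - 1 / (2 * a) + b])
    (hξ₁ : ∀ t u : ℝ, ξ₁ t u = ![0, 0, 0, 1, 0])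
    (hξ₂ : ∀ t u : ℝ, ξ₂ t u =
      ![(4 * a ^ 2 * (t ^ 2 + u ^ 2) + 3) / (2 * Real.sqrt 2),
        Real.sqrt 2 * a * t, Real.sqrt 2 * a * u, 0,
        (4 * a ^ 2 * (t ^ 2 + u ^ 2) + 1) / (2 * Real.sqrt 2)])
    (hξ₃ : ∀ t u : ℝ, ξ₃ t u =
      ![(1 - 4 * a ^ 2 * (t ^ 2 + u ^ 2)) / (2 * Real.sqrt 2),
        -(Real.sqrt 2 * a * t), -(Real.sqrt 2 * a * u), 0,
        (3 - 4 * a ^ 2 * (t ^ 2 + u ^ 2)) / (2 * Real.sqrt 2)]) :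
    ∀ t u : ℝ,
      lor5 (ξ₁ t u) (ξ₁ t u) = 1 ∧
      lor5 (ξ₂ t u) (ξ₂ t u) = -1 ∧
      lor5 (ξ₃ t u) (ξ₃ t u) = 1 ∧
      lor5 (ξ₁ t u) (ξ₂ t u) = 0 ∧
      lor5 (ξ₁ t u) (ξ₃ t u) = 0 ∧
      lor5 (ξ₂ t u) (ξ₃ t u) = 0 ∧
      lor5 (ξ₁ t u) (deriv (fun t' => Θ t' u) t) = 0 ∧
      lor5 (ξ₁ t u) (deriv (fun u' => Θ t u') u) = 0 ∧
      lor5 (ξ₂ t u) (deriv (fun t' => Θ t' u) t) = 0 ∧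
      lor5 (ξ₂ t u) (deriv (fun u' => Θ t u') u) = 0 ∧
      lor5 (ξ₃ t u) (deriv (fun t' => Θ t' u) t) = 0 ∧
      lor5 (ξ₃ t u) (deriv (fun u' => Θ t u') u) = 0 ∧
      deriv (fun t' => ξ₁ t' u) t = 0 ∧
      deriv (fun u' => ξ₁ t u') u = 0 ∧
      deriv (fun t' => ξ₂ t' u) t = (Real.sqrt 2 * a) • deriv (fun t' => Θ t' u) t ∧
      deriv (fun u' => ξ₂ t u') u = (Real.sqrt 2 * a) • deriv (fun u' => Θ t u') u ∧
      deriv (fun t' => ξ₃ t' u) t = (-(Real.sqrt 2 * a)) • deriv (fun t' => Θ t' u) t ∧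
      deriv (fun u' => ξ₃ t u') u = (-(Real.sqrt 2 * a)) • deriv (fun u' => Θ t u') u ∧
      deriv (fun t' => ξ₁ t' u) t ∈
        Submodule.span ℝ ({deriv (fun t' => Θ t' u) t, deriv (fun u' => Θ t u') u} : Set (Fin 5 → ℝ)) ∧
      deriv (fun u' => ξ₁ t u') u ∈
        Submodule.span ℝ ({deriv (fun t' => Θ t' u) t, deriv (fun u' => Θ t u') u} : Set (Fin 5 → ℝ)) ∧
      deriv (fun t' => ξ₂ t' u) t ∈
        Submodule.span ℝ ({deriv (fun t' => Θ t' u) t, deriv (fun u' => Θ t u') u} : Set (Fin 5 → ℝ)) ∧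
      deriv (fun u' => ξ₂ t u') u ∈
        Submodule.span ℝ ({deriv (fun t' => Θ t' u) t, deriv (fun u' => Θ t u') u} : Set (Fin 5 → ℝ)) ∧
      deriv (fun t' => ξ₃ t' u) t ∈
        Submodule.span ℝ ({deriv (fun t' => Θ t' u) t, deriv (fun u' => Θ t u') u} : Set (Fin 5 → ℝ)) ∧
      deriv (fun u' => ξ₃ t u') u ∈
        Submodule.span ℝ ({deriv (fun t' => Θ t' u) t, deriv (fun u' => Θ t u') u} : Set (Fin 5 → ℝ)) := by
  have hΘ' := funext₂ fun t u => (hΘ t u).trans (surface_eq_paraboloidMap a t u b _)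
  have hξ₂' := funext₂ fun t u => (hξ₂ t u).trans (timelikeNormal_eq_paraboloidMap a t u)
  have hξ₃' := funext₂ fun t u => (hξ₃ t u).trans (spacelikeNormal_eq_paraboloidMap a t u)
  intro t u
  have dΘt : deriv (Θ · u) t = ![2 * a * t, 1, 0, 0, 2 * a * t] := by
    rw [hΘ', (hasDerivAt_paraboloidMap_fst _ _ _ _ t u).deriv]
    ext i
    fin_cases i <;> simp <;> ring
  have dΘu : deriv (Θ t ·) u = ![2 * a * u, 0, 1, 0, 2 * a * u] := by
    rw [hΘ', (hasDerivAt_paraboloidMap_snd _ _ _ _ t u).deriv]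
    ext i
    fin_cases i <;> simp <;> ring
  have dξ₁t : deriv (ξ₁ · u) t = 0 := by simp [hξ₁]
  have dξ₁u : deriv (ξ₁ t ·) u = 0 := by simp [hξ₁]
  have dξ₂t : deriv (ξ₂ · u) t = (√2 * a) • deriv (Θ · u) t := by
    rw [hξ₂', hΘ', deriv_paraboloidMap_smul_fst]
  have dξ₂u : deriv (ξ₂ t ·) u = (√2 * a) • deriv (Θ t ·) u := by
    rw [hξ₂', hΘ', deriv_paraboloidMap_smul_snd]
  have dξ₃t : deriv (ξ₃ · u) t = (-(√2 * a)) • deriv (Θ · u) t := by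
    rw [hξ₃', hΘ', deriv_paraboloidMap_smul_fst]
  have dξ₃u : deriv (ξ₃ t ·) u = (-(√2 * a)) • deriv (Θ t ·) u := by
    rw [hξ₃', hΘ', deriv_paraboloidMap_smul_snd]
  have hs : √2 ^ 2 = 2 := sq_sqrt zero_le_two
  refine ⟨?_, ?_, ?_, ?_, ?_, ?_, ?_, ?_, ?_, ?_, ?_, ?_, dξ₁t, dξ₁u, dξ₂t, dξ₂u, dξ₃t, dξ₃u,
    mem_span_pair.2 ⟨0, 0, by simp [dξ₁t]⟩, mem_span_pair.2 ⟨0, 0, by simp [dξ₁u]⟩,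
    mem_span_pair.2 ⟨√2 * a, 0, by simp [dξ₂t]⟩, mem_span_pair.2 ⟨0, √2 * a, by simp [dξ₂u]⟩,
    mem_span_pair.2 ⟨-(√2 * a), 0, by simp [dξ₃t]⟩, mem_span_pair.2 ⟨0, -(√2 * a), by simp [dξ₃u]⟩⟩
  all_goals simp [lor5, hξ₁, hξ₂, hξ₃, dΘt, dΘu] <;> field_simp <;> grind

/-- Case 4 of the proof of Theorem 4.8: `ξ₁, ξ₂, ξ₃` form a parallel
pseudo-orthonormal basis of the normal bundle in `ℝ⁵₁` of the flat integral
surface of case (4) of Proposition 4.3. -/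
theorem stmt_12 (a b : ℝ) (ha : a ≠ 0)
    (hb : b / a - 1 / (4 * a ^ 2) - 1 ≥ 0)
    (Θ ξ₁ ξ₂ ξ₃ : ℝ → ℝ → Fin 5 → ℝ)
    (hΘ : ∀ t u : ℝ, Θ t u =
      ![a * (t ^ 2 + u ^ 2) + b, t, u,
        Real.sqrt (b / a - 1 / (4 * a ^ 2) - 1),
        a * (t ^ 2 + u ^ 2) - 1 / (2 * a) + b])
    (hξ₁ : ∀ t u : ℝ, ξ₁ t u = ![0, 0, 0, 1, 0])
    (hξ₂ : ∀ t u : ℝ, ξ₂ t u =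
      ![(4 * a ^ 2 * (t ^ 2 + u ^ 2) + 3) / (2 * Real.sqrt 2),
        Real.sqrt 2 * a * t, Real.sqrt 2 * a * u, 0,
        (4 * a ^ 2 * (t ^ 2 + u ^ 2) + 1) / (2 * Real.sqrt 2)])
    (hξ₃ : ∀ t u : ℝ, ξ₃ t u =
      ![(1 - 4 * a ^ 2 * (t ^ 2 + u ^ 2)) / (2 * Real.sqrt 2),
        -(Real.sqrt 2 * a * t), -(Real.sqrt 2 * a * u), 0,
        (3 - 4 * a ^ 2 * (t ^ 2 + u ^ 2)) / (2 * Real.sqrt 2)]) :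
    ∀ t u : ℝ,
      lor5 (ξ₁ t u) (ξ₁ t u) = 1 ∧
      lor5 (ξ₂ t u) (ξ₂ t u) = -1 ∧
      lor5 (ξ₃ t u) (ξ₃ t u) = 1 ∧
      lor5 (ξ₁ t u) (ξ₂ t u) = 0 ∧
      lor5 (ξ₁ t u) (ξ₃ t u) = 0 ∧
      lor5 (ξ₂ t u) (ξ₃ t u) = 0 ∧
      lor5 (ξ₁ t u) (deriv (fun t' => Θ t' u) t) = 0 ∧
      lor5 (ξ₁ t u) (deriv (fun u' => Θ t u') u) = 0 ∧
      lor5 (ξ₂ t u) (deriv (fun t' => Θ t' u) t) = 0 ∧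
      lor5 (ξ₂ t u) (deriv (fun u' => Θ t u') u) = 0 ∧
      lor5 (ξ₃ t u) (deriv (fun t' => Θ t' u) t) = 0 ∧
      lor5 (ξ₃ t u) (deriv (fun u' => Θ t u') u) = 0 ∧
      deriv (fun t' => ξ₁ t' u) t = 0 ∧
      deriv (fun u' => ξ₁ t u') u = 0 ∧
      deriv (fun t' => ξ₂ t' u) t = (Real.sqrt 2 * a) • deriv (fun t' => Θ t' u) t ∧
      deriv (fun u' => ξ₂ t u') u = (Real.sqrt 2 * a) • deriv (fun u' => Θ t u') u ∧
      deriv (fun t' => ξ₃ t' u) t = (-(Real.sqrt 2 * a)) • deriv (fun t' => Θ t' u) t ∧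
      deriv (fun u' => ξ₃ t u') u = (-(Real.sqrt 2 * a)) • deriv (fun u' => Θ t u') u ∧
      deriv (fun t' => ξ₁ t' u) t ∈
        Submodule.span ℝ ({deriv (fun t' => Θ t' u) t, deriv (fun u' => Θ t u') u} : Set (Fin 5 → ℝ)) ∧
      deriv (fun u' => ξ₁ t u') u ∈
        Submodule.span ℝ ({deriv (fun t' => Θ t' u) t, deriv (fun u' => Θ t u') u} : Set (Fin 5 → ℝ)) ∧
      deriv (fun t' => ξ₂ t' u) t ∈
        Submodule.span ℝ ({deriv (fun t' => Θ t' u) t, deriv (fun u' => Θ t u') u} : Set (Fin 5 → ℝ)) ∧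
      deriv (fun u' => ξ₂ t u') u ∈
        Submodule.span ℝ ({deriv (fun t' => Θ t' u) t, deriv (fun u' => Θ t u') u} : Set (Fin 5 → ℝ)) ∧
      deriv (fun t' => ξ₃ t' u) t ∈
        Submodule.span ℝ ({deriv (fun t' => Θ t' u) t, deriv (fun u' => Θ t u') u} : Set (Fin 5 → ℝ)) ∧
      deriv (fun u' => ξ₃ t u') u ∈
        Submodule.span ℝ ({deriv (fun t' => Θ t' u) t, deriv (fun u' => Θ t u') u} : Set (Fin 5 → ℝ)) :=
  stmt_12_general a b Θ ξ₁ ξ₂ ξ₃ hΘ hξ₁ hξ₂ hξ₃
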